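/- Let (A,B) be a pair of nonnegative random variables admitting a (ρ,H)-local dependence measure g. If λ ∈ (0,∞) and X is an IED^ρ_H(λ)-random variable, independent of (A,B), that is a solution to the stochastic fixed point equation X =_d AX+B, then λ = φ_ρ(λ). -/

import Mathlib

open MeasureTheory ProbabilityTheory Filter Set Topology
open scoped ENNReal

/-- `-log p`, valued in `[0,∞]`, with the convention `-log 0 = ∞`. -/
noncomputable def negLog (p : ℝ≥0∞) : ℝ≥0∞ :=
  if p = 0 then ⊤ else ENNReal.ofReal (-Real.log p.toReal)

/-- `H` is positive, continuous and strictly decreasing on `(0,∞)`, and regularly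
varying at `0` with index `-ρ < 0`. -/
structure IsRVatZero (H : ℝ → ℝ) (ρ : ℝ) : Prop where
  rho_pos : 0 < ρ
  pos : ∀ x ∈ Set.Ioi (0:ℝ), 0 < H x
  contOn : ContinuousOn H (Set.Ioi 0)
  anti : StrictAntiOn H (Set.Ioi 0)
  rv : ∀ y ∈ Set.Ioi (0:ℝ),
    Filter.Tendsto (fun x => H (y * x) / H x) (nhdsWithin 0 (Set.Ioi 0)) (nhds (y ^ (-ρ)))

/-- `X` is an `IED^ρ_H(l)`-random variable with respect to `μ`:
`lim_{ε→0⁺} (-log P(X < ε))/H(ε) = l`. -/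
def IsIED {Ω : Type*} [MeasurableSpace Ω] (μ : Measure Ω) (X : Ω → ℝ)
    (H : ℝ → ℝ) (l : ℝ≥0∞) : Prop :=
  Filter.Tendsto (fun ε => negLog (μ {ω | X ω < ε}) / ENNReal.ofReal (H ε))
    (nhdsWithin 0 (Set.Ioi 0)) (nhds l)

/-- `g` is the `(ρ,H)`-local dependence measure of the pair `(A,B)`:
`g(y) = lim_{ε→0⁺} (-log P(εAy + B < ε))/H(ε)` for every `y ≥ 0`. -/
def IsLDM {Ω : Type*} [MeasurableSpace Ω] (μ : Measure Ω) (A B : Ω → ℝ)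
    (H : ℝ → ℝ) (g : ℝ → ℝ≥0∞) : Prop :=
  ∀ y : ℝ, 0 ≤ y →
    Filter.Tendsto (fun ε => negLog (μ {ω | ε * A ω * y + B ω < ε}) / ENNReal.ofReal (H ε))
      (nhdsWithin 0 (Set.Ioi 0)) (nhds (g y))

/-- The Legendre-type transform `φ_ρ(λ) = inf_{y>0} { g(y) + λ/y^ρ }`. -/
noncomputable def phi (g : ℝ → ℝ≥0∞) (ρ : ℝ) (l : ℝ≥0∞) : ℝ≥0∞ :=
  ⨅ y ∈ Set.Ioi (0:ℝ), (g y + l / ENNReal.ofReal (y ^ ρ))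

/-- `λ* = inf_{y>1} { (y^ρ/(y^ρ-1)) g(y) }`. -/
noncomputable def lambdaStar (g : ℝ → ℝ≥0∞) (ρ : ℝ) : ℝ≥0∞ :=
  ⨅ y ∈ Set.Ioi (1:ℝ), ENNReal.ofReal (y ^ ρ / (y ^ ρ - 1)) * g y



lemma negLog_anti {p q : ℝ≥0∞} (hpq : p ≤ q) : negLog q ≤ negLog p := by
  unfold negLog
  by_cases hp : p = 0
  · simp [hp]
  · have hq : q ≠ 0 := fun h => hp (le_antisymm (h ▸ hpq) zero_le)
    rw [if_neg hp, if_neg hq]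
    by_cases hqt : q = ⊤
    · simp [hqt, Real.log_zero]
    · have hpt : p ≠ ⊤ := fun h => hqt (top_le_iff.mp (h ▸ hpq))
      apply ENNReal.ofReal_le_ofReal
      have h1 : 0 < p.toReal := ENNReal.toReal_pos hp hpt
      have h2 : p.toReal ≤ q.toReal := (ENNReal.toReal_le_toReal hpt hqt).mpr hpq
      simpa using Real.log_le_log h1 h2

lemma negLog_mul {p q : ℝ≥0∞} (hp : p ≤ 1) (hq : q ≤ 1) :
    negLog (p * q) = negLog p + negLog q := by
  unfold negLog
  by_cases hp0 : p = 0
  · simp [hp0]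
  by_cases hq0 : q = 0
  · simp [hq0]
  have hpt : p ≠ ⊤ := ne_top_of_le_ne_top ENNReal.one_ne_top hp
  have hqt : q ≠ ⊤ := ne_top_of_le_ne_top ENNReal.one_ne_top hq
  have hpq0 : p * q ≠ 0 := mul_ne_zero hp0 hq0
  rw [if_neg hpq0, if_neg hp0, if_neg hq0]
  have h1 : 0 < p.toReal := ENNReal.toReal_pos hp0 hpt
  have h2 : 0 < q.toReal := ENNReal.toReal_pos hq0 hqt
  have hl1 : p.toReal ≤ 1 := by
    rw [← ENNReal.toReal_one]; exact (ENNReal.toReal_le_toReal hpt ENNReal.one_ne_top).mpr hp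
  have hl2 : q.toReal ≤ 1 := by
    rw [← ENNReal.toReal_one]; exact (ENNReal.toReal_le_toReal hqt ENNReal.one_ne_top).mpr hq
  rw [ENNReal.toReal_mul, Real.log_mul h1.ne' h2.ne', neg_add,
    ENNReal.ofReal_add (by simpa using Real.log_nonpos h1.le hl1)
      (by simpa using Real.log_nonpos h2.le hl2)]

lemma ofReal_le_negLog_iff {p : ℝ≥0∞} (hp : p ≤ 1) {t : ℝ} (ht : 0 ≤ t) :
    ENNReal.ofReal t ≤ negLog p ↔ p ≤ ENNReal.ofReal (Real.exp (-t)) := by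
  unfold negLog
  by_cases hp0 : p = 0
  · simp [hp0]
  have hpt : p ≠ ⊤ := ne_top_of_le_ne_top ENNReal.one_ne_top hp
  have h1 : 0 < p.toReal := ENNReal.toReal_pos hp0 hpt
  rw [if_neg hp0, ENNReal.ofReal_le_ofReal_iff',
    ENNReal.le_ofReal_iff_toReal_le hpt (Real.exp_pos _).le]
  constructor
  · rintro (h | h)
    · have : Real.log p.toReal ≤ -t := by linarith
      exact ((Real.log_le_iff_le_exp h1).mp this)
    · have : t = 0 := le_antisymm h ht
      subst this
      have hl1 : p.toReal ≤ 1 := by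
        rw [← ENNReal.toReal_one]
        exact (ENNReal.toReal_le_toReal hpt ENNReal.one_ne_top).mpr hp
      simpa using hl1
  · intro h
    left
    have := (Real.log_le_iff_le_exp h1).mpr h
    linarith

lemma ennreal_div_mul_div {a b c : ℝ≥0∞} (hc : c ≠ 0) (hc' : c ≠ ⊤) :
    a / c * (c / b) = a / b := by
  rw [div_eq_mul_inv, div_eq_mul_inv, div_eq_mul_inv]
  calc a * c⁻¹ * (c * b⁻¹) = a * b⁻¹ * (c⁻¹ * c) := by ring
    _ = a * b⁻¹ := by rw [ENNReal.inv_mul_cancel hc hc', mul_one]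

lemma ofReal_rpow_neg {y ρ : ℝ} (hy : 0 < y) :
    ENNReal.ofReal (y ^ (-ρ)) = (ENNReal.ofReal (y ^ ρ))⁻¹ := by
  rw [Real.rpow_neg hy.le, ENNReal.ofReal_inv_of_pos (Real.rpow_pos_of_pos hy _)]

lemma IsRVatZero.tendsto_atTop' {H : ℝ → ℝ} {ρ : ℝ} (hH : IsRVatZero H ρ) :
    Tendsto H (nhdsWithin 0 (Set.Ioi 0)) atTop := by
  have hL : (1:ℝ) < ((2:ℝ)⁻¹) ^ (-ρ) := by
    rw [Real.one_lt_rpow_iff_of_pos (by norm_num)]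
    right
    exact ⟨by norm_num, neg_neg_iff_pos.mpr hH.rho_pos⟩
  set L := ((2:ℝ)⁻¹) ^ (-ρ) with hLdef
  set r := (1 + L) / 2 with hrdef
  have hr1 : 1 < r := by rw [hrdef]; linarith
  have hrL : r < L := by rw [hrdef]; linarith
  have hev : ∀ᶠ x in nhdsWithin (0:ℝ) (Set.Ioi 0), r < H ((2:ℝ)⁻¹ * x) / H x := by
    have := hH.rv ((2:ℝ)⁻¹) (by norm_num)
    exact this (Ioi_mem_nhds hrL)
  rw [eventually_iff, mem_nhdsGT_iff_exists_Ioc_subset] at hev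
  obtain ⟨δ, hδ, hsub⟩ := hev
  simp only [Set.mem_Ioi] at hδ
  have key : ∀ k : ℕ, ∀ x ∈ Set.Ioc (0:ℝ) (δ / 2 ^ k), r ^ k * H δ ≤ H x := by
    intro k
    induction k with
    | zero =>
      intro x hx
      simp only [pow_zero, one_mul]
      have hxδ : x ≤ δ := by simpa using hx.2
      exact hH.anti.antitoneOn (Set.mem_Ioi.mpr hx.1) (Set.mem_Ioi.mpr hδ) hxδ
    | succ k ih =>
      intro x hx
      have h2x : (2:ℝ) * x ∈ Set.Ioc (0:ℝ) (δ / 2 ^ k) := by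
        constructor
        · linarith [hx.1]
        · have h1 : x ≤ δ / (2 ^ k * 2) := by
            have := hx.2; rw [pow_succ] at this; exact this
          have h2 : (2:ℝ) * x ≤ 2 * (δ / (2 ^ k * 2)) := by linarith
          have h3 : (2:ℝ) * (δ / (2 ^ k * 2)) = δ / 2 ^ k := by
            field_simp
          linarith
      have h2xδ : (2:ℝ) * x ∈ Set.Ioc (0:ℝ) δ := by
        refine ⟨h2x.1, h2x.2.trans ?_⟩
        apply div_le_self hδ.le
        exact one_le_pow₀ (by norm_num)
      have hratio : r < H ((2:ℝ)⁻¹ * (2 * x)) / H (2 * x) := hsub h2xδ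
      have hpos : 0 < H (2 * x) := hH.pos _ (Set.mem_Ioi.mpr h2x.1)
      have hlt : r * H (2 * x) < H ((2:ℝ)⁻¹ * (2 * x)) := by
        rw [← lt_div_iff₀ hpos]; exact hratio
      have hxx : (2:ℝ)⁻¹ * (2 * x) = x := by ring
      rw [hxx] at hlt
      calc r ^ (k+1) * H δ = r * (r ^ k * H δ) := by ring
        _ ≤ r * H (2 * x) := mul_le_mul_of_nonneg_left (ih _ h2x) (by linarith)
        _ ≤ H x := hlt.le
  refine Filter.tendsto_atTop.mpr fun M => ?_
  have hHδ : 0 < H δ := hH.pos _ (Set.mem_Ioi.mpr hδ)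
  obtain ⟨k, hk⟩ := (tendsto_pow_atTop_atTop_of_one_lt hr1).eventually_ge_atTop (M / H δ) |>.exists
  have hk' : M ≤ r ^ k * H δ := by
    rw [div_le_iff₀ hHδ] at hk; linarith
  filter_upwards [Ioc_mem_nhdsGT_of_mem (c := (0:ℝ)) (a := δ/2^k)
    (Set.mem_Ico.mpr ⟨le_refl _, by positivity⟩)] with x hx
  exact hk'.trans (key k x hx)


/-- Corollary `corol:fixedPoint`.
If `(A,B)` has `(ρ,H)`-LDM `g`, `λ ∈ (0,∞)`, and `X` is an `IED^ρ_H(λ)`-random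
variable, independent of `(A,B)`, solving `X =_d AX + B`, then `λ = φ_ρ(λ)`. -/
theorem stmt3 {Ω : Type*} [MeasurableSpace Ω] (μ : Measure Ω) [IsProbabilityMeasure μ]
    (H : ℝ → ℝ) (ρ : ℝ) (hH : IsRVatZero H ρ)
    (A B X : Ω → ℝ) (hA : Measurable A) (hB : Measurable B) (hX : Measurable X)
    (hA0 : ∀ᵐ ω ∂μ, 0 ≤ A ω) (hB0 : ∀ᵐ ω ∂μ, 0 ≤ B ω) (hX0 : ∀ᵐ ω ∂μ, 0 ≤ X ω)
    (g : ℝ → ℝ≥0∞) (hg : IsLDM μ A B H g)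
    (l : ℝ≥0∞) (hl0 : 0 < l) (hltop : l ≠ ⊤) (hXIED : IsIED μ X H l)
    (hindep : IndepFun X (fun ω => (A ω, B ω)) μ)
    (hfix : μ.map X = μ.map (fun ω => A ω * X ω + B ω)) :
    l = phi g ρ l := by
  classical
  have hρ := hH.rho_pos
  -- measurability of the (A,B) target sets
  have hABmeas : ∀ ε y : ℝ, MeasurableSet {p : ℝ × ℝ | ε * p.1 * y + p.2 < ε} := by
    intro ε y
    exact measurableSet_lt (((measurable_fst.const_mul ε).mul_const y).add measurable_snd)
      measurable_const
  have hindep' : ∀ a ε y : ℝ,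
      μ ({ω | X ω < a} ∩ {ω | ε * A ω * y + B ω < ε})
        = μ {ω | X ω < a} * μ {ω | ε * A ω * y + B ω < ε} :=
    fun a ε y => hindep.measure_inter_preimage_eq_mul _ _ measurableSet_Iio (hABmeas ε y)
  have hfix' : ∀ ε : ℝ, μ {ω | A ω * X ω + B ω < ε} = μ {ω | X ω < ε} := by
    intro ε
    have h1 : μ {ω | X ω < ε} = μ.map X (Set.Iio ε) := by
      rw [Measure.map_apply hX measurableSet_Iio]; rfl
    have h2 : μ {ω | A ω * X ω + B ω < ε} = μ.map (fun ω => A ω * X ω + B ω) (Set.Iio ε) := by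
      rw [Measure.map_apply (f := fun ω => A ω * X ω + B ω) ((hA.mul hX).add hB) measurableSet_Iio]; rfl
    rw [h1, h2, hfix]
  have hHtop := hH.tendsto_atTop'
  -- scaling limit
  have L1 : ∀ y : ℝ, 0 < y →
      Tendsto (fun ε => negLog (μ {ω | X ω < ε * y}) / ENNReal.ofReal (H ε))
        (nhdsWithin (0:ℝ) (Set.Ioi 0)) (nhds (l * ENNReal.ofReal (y ^ (-ρ)))) := by
    intro y hy
    have hmap : Tendsto (fun ε : ℝ => ε * y) (nhdsWithin 0 (Set.Ioi 0))
        (nhdsWithin 0 (Set.Ioi 0)) := by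
      rw [tendsto_nhdsWithin_iff]
      constructor
      · have h1 : Tendsto (fun ε : ℝ => ε * y) (nhds 0) (nhds 0) := by
          simpa using (continuous_mul_right y).tendsto (0:ℝ)
        exact h1.mono_left nhdsWithin_le_nhds
      · filter_upwards [self_mem_nhdsWithin] with x hx
        exact mul_pos hx hy
    have h1 : Tendsto (fun ε => negLog (μ {ω | X ω < ε * y}) / ENNReal.ofReal (H (ε * y)))
        (nhdsWithin 0 (Set.Ioi 0)) (nhds l) := hXIED.comp hmap
    have h2 : Tendsto (fun ε => ENNReal.ofReal (H (ε * y)) / ENNReal.ofReal (H ε))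
        (nhdsWithin 0 (Set.Ioi 0)) (nhds (ENNReal.ofReal (y ^ (-ρ)))) := by
      have h3 : Tendsto (fun x => H (x * y) / H x) (nhdsWithin 0 (Set.Ioi 0))
          (nhds (y ^ (-ρ))) := by
        refine (hH.rv y (Set.mem_Ioi.mpr hy)).congr fun x => by rw [mul_comm]
      refine (ENNReal.tendsto_ofReal h3).congr' ?_
      filter_upwards [self_mem_nhdsWithin] with x hx
      exact ENNReal.ofReal_div_of_pos (hH.pos x hx)
    have hmul := ENNReal.Tendsto.mul h1 (Or.inr ENNReal.ofReal_ne_top) h2 (Or.inr hltop)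
    refine hmul.congr' ?_
    filter_upwards [self_mem_nhdsWithin] with ε hε
    have hc0 : ENNReal.ofReal (H (ε * y)) ≠ 0 := by
      simp only [ne_eq, ENNReal.ofReal_eq_zero, not_le]
      exact hH.pos _ (mul_pos hε hy)
    exact ennreal_div_mul_div hc0 ENNReal.ofReal_ne_top
  -- UPPER BOUND : l ≤ phi
  have hub : l ≤ phi g ρ l := by
    refine le_iInf₂ fun y hy => ?_
    have hy' : 0 < y := hy
    have hsub : ∀ ε : ℝ,
        negLog (μ {ω | X ω < ε}) / ENNReal.ofReal (H ε)
          ≤ (negLog (μ {ω | X ω < ε * y}) / ENNReal.ofReal (H ε))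
            + (negLog (μ {ω | ε * A ω * y + B ω < ε}) / ENNReal.ofReal (H ε)) := by
      intro ε
      have hincl : μ ({ω | X ω < ε * y} ∩ {ω | ε * A ω * y + B ω < ε})
          ≤ μ {ω | A ω * X ω + B ω < ε} := by
        apply measure_mono_ae
        filter_upwards [hA0] with ω hA0ω
        rintro ⟨h1, h2⟩
        simp only [Set.mem_setOf_eq] at h1 h2 ⊢
        have hm : A ω * X ω ≤ A ω * (ε * y) := mul_le_mul_of_nonneg_left h1.le hA0ω
        show A ω * X ω + B ω < ε
        calc A ω * X ω + B ω ≤ A ω * (ε * y) + B ω := add_le_add_left hm _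
          _ = ε * A ω * y + B ω := by ring
          _ < ε := h2
      have hkey : negLog (μ {ω | X ω < ε})
          ≤ negLog (μ {ω | X ω < ε * y}) + negLog (μ {ω | ε * A ω * y + B ω < ε}) := by
        rw [← hfix' ε, ← negLog_mul prob_le_one prob_le_one, ← hindep' (ε*y) ε y]
        exact negLog_anti hincl
      calc negLog (μ {ω | X ω < ε}) / ENNReal.ofReal (H ε)
          ≤ (negLog (μ {ω | X ω < ε * y}) + negLog (μ {ω | ε * A ω * y + B ω < ε}))
              / ENNReal.ofReal (H ε) := ENNReal.div_le_div_right hkey _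
        _ = _ := (ENNReal.div_add_div_same).symm
    have hle := le_of_tendsto_of_tendsto' hXIED ((L1 y hy').add (hg y hy'.le)) hsub
    have heq2 : l * ENNReal.ofReal (y ^ (-ρ)) = l / ENNReal.ofReal (y ^ ρ) := by
      rw [ofReal_rpow_neg hy', div_eq_mul_inv]
    rw [heq2] at hle
    exact hle.trans_eq (add_comm _ _)
  -- LOWER BOUND : phi ≤ l
  have hlb : phi g ρ l ≤ l := by
    by_contra hcon
    push_neg at hcon
    obtain ⟨d, hld, hdphi⟩ := exists_between hcon
    have hdtop : d ≠ ⊤ := (lt_of_lt_of_le hdphi le_top).ne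
    have hl0' : l ≠ 0 := hl0.ne'
    have hlR : 0 < l.toReal := ENNReal.toReal_pos hl0' hltop
    have hdR : l.toReal < d.toReal := (ENNReal.toReal_lt_toReal hltop hdtop).mpr hld
    have hd0 : 0 < d.toReal := lt_trans hlR hdR
    set θ := (l.toReal / d.toReal + 1) / 2 with hθdef
    have hθ0 : 0 < θ := by positivity
    have hratio : l.toReal / d.toReal < 1 := (div_lt_one hd0).mpr hdR
    have hθ1 : θ < 1 := by rw [hθdef]; linarith
    have hθgt : l.toReal / d.toReal < θ := by rw [hθdef]; linarith
    set q := θ ^ (-ρ⁻¹) with hqdef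
    have hq1 : 1 < q := by
      rw [hqdef, Real.one_lt_rpow_iff_of_pos hθ0]
      right
      exact ⟨hθ1, neg_lt_zero.mpr (inv_pos.mpr hρ)⟩
    have hq0 : 0 < q := lt_trans one_pos hq1
    have hqθ : q ^ (-ρ) = θ := by
      rw [hqdef, ← Real.rpow_mul hθ0.le,
        show (-ρ⁻¹) * (-ρ) = 1 by field_simp, Real.rpow_one]
    have hθl : l < ENNReal.ofReal θ * phi g ρ l := by
      have h1 : l < ENNReal.ofReal θ * d := by
        have hx : l.toReal < θ * d.toReal := by
          rw [div_lt_iff₀ hd0] at hθgt; linarith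
        calc l = ENNReal.ofReal l.toReal := (ENNReal.ofReal_toReal hltop).symm
          _ < ENNReal.ofReal (θ * d.toReal) := by
              rw [ENNReal.ofReal_lt_ofReal_iff (by positivity)]; exact hx
          _ = ENNReal.ofReal θ * ENNReal.ofReal d.toReal := ENNReal.ofReal_mul hθ0.le
          _ = ENNReal.ofReal θ * d := by rw [ENNReal.ofReal_toReal hdtop]
      exact h1.trans_le (mul_le_mul_right hdphi.le _)
    -- choose N
    obtain ⟨N, hN1, hNprop⟩ : ∃ N : ℕ, 1 ≤ N ∧
        l + l * ENNReal.ofReal (q ^ (-(((N:ℝ)) - 1) * ρ)) < d := by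
      have hgeo : Tendsto (fun N : ℕ => θ ^ ((N:ℝ) - 1)) atTop (nhds 0) := by
        have h1 := tendsto_rpow_atTop_of_base_lt_one θ (by linarith) hθ1
        have h2 : Tendsto (fun N : ℕ => (N:ℝ) - 1) atTop atTop :=
          tendsto_atTop_add_const_right atTop (-1) tendsto_natCast_atTop_atTop
        exact h1.comp h2
      have hrw : ∀ N : ℕ, q ^ (-(((N:ℝ)) - 1) * ρ) = θ ^ ((N:ℝ) - 1) := fun N => by
        rw [show -(((N:ℝ))-1)*ρ = (-ρ)*(((N:ℝ))-1) by ring, Real.rpow_mul hq0.le, hqθ]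
      have h0 : Tendsto (fun N : ℕ => l * ENNReal.ofReal (q ^ (-(((N:ℝ)) - 1) * ρ)))
          atTop (nhds 0) := by
        have h3 := ENNReal.Tendsto.const_mul (a := l) (ENNReal.tendsto_ofReal hgeo)
          (Or.inr hltop)
        simp only [ENNReal.ofReal_zero, mul_zero] at h3
        refine h3.congr fun N => by rw [hrw N]
      have hev := (h0.eventually (eventually_lt_nhds (tsub_pos_of_lt hld))).and (eventually_ge_atTop 1)
      obtain ⟨N, hN2, hN1⟩ := hev.exists
      refine ⟨N, hN1, ?_⟩
      have := ENNReal.add_lt_add_left hltop hN2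
      calc l + l * ENNReal.ofReal (q ^ (-(((N:ℝ)) - 1) * ρ)) < l + (d - l) := this
        _ = d := by rw [add_comm]; exact tsub_add_cancel_of_le hld.le
    -- the geometric grid
    set y : ℕ → ℝ := fun i => q ^ ((i:ℝ) - 1) with hydef
    have hypos : ∀ i, 0 < y i := fun i => Real.rpow_pos_of_pos hq0 _
    have hysucc : ∀ i : ℕ, y (i+1) = q * y i := by
      intro i
      simp only [hydef]
      rw [show (((i+1:ℕ)):ℝ) - 1 = 1 + ((i:ℝ) - 1) by push_cast; ring,
        Real.rpow_add hq0, Real.rpow_one]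
    -- l / ofReal (w^ρ) = l * ofReal (w^(-ρ))
    have hdivmul : ∀ w : ℝ, 0 < w →
        l / ENNReal.ofReal (w ^ ρ) = l * ENNReal.ofReal (w ^ (-ρ)) := fun w hw => by
      rw [ofReal_rpow_neg hw, div_eq_mul_inv]
    have hphile : ∀ w : ℝ, 0 < w → phi g ρ l ≤ g w + l * ENNReal.ofReal (w ^ (-ρ)) :=
      fun w hw => by
        rw [← hdivmul w hw]
        exact iInf₂_le w (Set.mem_Ioi.mpr hw)
    set K := N + 2 with hKdef
    set T : ℕ → ℝ → Set Ω := fun i ε =>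
      if i = 0 then {ω | X ω < ε * y 0}
      else if i = N+1 then {ω | ε * A ω * y N + B ω < ε}
      else {ω | X ω < ε * y i} ∩ {ω | ε * A ω * y (i-1) + B ω < ε} with hTdef
    set r : ℕ → ℝ≥0∞ := fun i =>
      if i = 0 then l * ENNReal.ofReal ((y 0) ^ (-ρ))
      else if i = N+1 then g (y N)
      else l * ENNReal.ofReal ((y i) ^ (-ρ)) + g (y (i-1)) with hrdef2
    have claim1 : ∀ i : ℕ, Tendsto (fun ε => negLog (μ (T i ε)) / ENNReal.ofReal (H ε))
        (nhdsWithin (0:ℝ) (Set.Ioi 0)) (nhds (r i)) := by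
      intro i
      by_cases hi0 : i = 0
      · subst hi0
        simp only [hTdef, hrdef2, if_pos rfl]
        exact L1 (y 0) (hypos 0)
      by_cases hiN : i = N+1
      · subst hiN
        simp only [hTdef, hrdef2, if_neg (Nat.succ_ne_zero N), if_pos rfl]
        exact hg (y N) (hypos N).le
      · simp only [hTdef, hrdef2, if_neg hi0, if_neg hiN]
        have hten := (L1 (y i) (hypos i)).add (hg (y (i-1)) (hypos (i-1)).le)
        refine hten.congr fun ε => ?_
        rw [ENNReal.div_add_div_same, ← negLog_mul prob_le_one prob_le_one,
          ← hindep' (ε * y i) ε (y (i-1))]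
    have claim2 : ∀ i < K, l < r i := by
      intro i hiK
      by_cases hi0 : i = 0
      · subst hi0
        simp only [hrdef2, if_pos rfl]
        have h1 : (y 0) ^ (-ρ) = q ^ ρ := by
          simp only [hydef, Nat.cast_zero, zero_sub]
          rw [← Real.rpow_mul hq0.le]
          norm_num
        rw [h1]
        calc l = l * 1 := (mul_one l).symm
          _ < l * ENNReal.ofReal (q ^ ρ) := by
              rw [ENNReal.mul_lt_mul_iff_right hl0' hltop, ENNReal.one_lt_ofReal]
              rw [Real.one_lt_rpow_iff_of_pos hq0]
              exact Or.inl ⟨hq1, hρ⟩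
      by_cases hiN : i = N+1
      · subst hiN
        simp only [hrdef2, if_neg (Nat.succ_ne_zero N), if_pos rfl]
        by_contra hle
        push_neg at hle
        have h3 : (y N) ^ (-ρ) = q ^ (-(((N:ℝ)) - 1) * ρ) := by
          simp only [hydef]
          rw [← Real.rpow_mul hq0.le]
          ring_nf
        have h4 : phi g ρ l ≤ l + l * ENNReal.ofReal (q ^ (-(((N:ℝ)) - 1) * ρ)) := by
          calc phi g ρ l ≤ g (y N) + l * ENNReal.ofReal ((y N) ^ (-ρ)) :=
                hphile (y N) (hypos N)
            _ ≤ l + l * ENNReal.ofReal (q ^ (-(((N:ℝ)) - 1) * ρ)) := by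
                rw [h3]; exact add_le_add_left hle _
        exact absurd (lt_of_le_of_lt h4 (hNprop.trans hdphi)) (lt_irrefl _)
      · have hi1 : 1 ≤ i := Nat.one_le_iff_ne_zero.mpr hi0
        simp only [hrdef2, if_neg hi0, if_neg hiN]
        set w := y (i-1) with hwdef
        have hw : 0 < w := hypos _
        have hyi : y i = q * w := by
          calc y i = y ((i-1)+1) := by congr 1; omega
            _ = q * w := hysucc (i-1)
        have hkey : ENNReal.ofReal θ * phi g ρ l
            ≤ l * ENNReal.ofReal ((y i) ^ (-ρ)) + g w := by
          have hyirw : (y i) ^ (-ρ) = θ * w ^ (-ρ) := by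
            rw [hyi, Real.mul_rpow hq0.le hw.le, hqθ]
          calc ENNReal.ofReal θ * phi g ρ l
              ≤ ENNReal.ofReal θ * (g w + l * ENNReal.ofReal (w ^ (-ρ))) :=
                mul_le_mul_right (hphile w hw) _
            _ = ENNReal.ofReal θ * g w
                + ENNReal.ofReal θ * (l * ENNReal.ofReal (w ^ (-ρ))) := mul_add _ _ _
            _ ≤ g w + l * ENNReal.ofReal ((y i) ^ (-ρ)) := by
                refine add_le_add ?_ ?_
                · calc ENNReal.ofReal θ * g w ≤ 1 * g w :=
                        mul_le_mul_left (ENNReal.ofReal_le_one.mpr hθ1.le) _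
                    _ = g w := one_mul _
                · rw [hyirw, ENNReal.ofReal_mul hθ0.le]
                  calc ENNReal.ofReal θ * (l * ENNReal.ofReal (w ^ (-ρ)))
                      = l * (ENNReal.ofReal θ * ENNReal.ofReal (w ^ (-ρ))) := by ring
                    _ ≤ l * (ENNReal.ofReal θ * ENNReal.ofReal (w ^ (-ρ))) := le_refl _
            _ = l * ENNReal.ofReal ((y i) ^ (-ρ)) + g w := add_comm _ _
        exact lt_of_lt_of_le hθl hkey
    -- pick c, c' between l and the rates
    have hinf : l < (Finset.range K).inf r :=
      (Finset.lt_inf_iff (hltop.lt_top)).mpr fun i hi => claim2 i (Finset.mem_range.mp hi)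
    obtain ⟨c, hlc, hcinf⟩ := exists_between hinf
    have hcr : ∀ i ∈ Finset.range K, c < r i :=
      fun i hi => lt_of_lt_of_le hcinf (Finset.inf_le hi)
    have hctop : c ≠ ⊤ := (lt_of_lt_of_le hcinf le_top).ne
    set t := c.toReal with htdef
    have hc0 : c ≠ 0 := (hl0.trans hlc).ne'
    have ht0 : 0 < t := ENNReal.toReal_pos hc0 hctop
    obtain ⟨c', hlc', hc'c⟩ := exists_between hlc
    have hc'top : c' ≠ ⊤ := (hc'c.trans hctop.lt_top).ne
    have hc't : c'.toReal < t := (ENNReal.toReal_lt_toReal hc'top hctop).mpr hc'c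
    have hc'0 : (0:ℝ) ≤ c'.toReal := ENNReal.toReal_nonneg
    -- eventually statements
    have E2 : ∀ᶠ ε in nhdsWithin (0:ℝ) (Set.Ioi 0), ∀ i ∈ Finset.range K,
        c < negLog (μ (T i ε)) / ENNReal.ofReal (H ε) := by
      rw [Filter.eventually_all_finset]
      intro i hi
      exact (claim1 i).eventually (eventually_gt_nhds (hcr i hi))
    have E3 : ∀ᶠ ε in nhdsWithin (0:ℝ) (Set.Ioi 0),
        Real.log (K:ℝ) / H ε < t - c'.toReal := by
      have h1 := Tendsto.div_atTop (tendsto_const_nhds (x := Real.log (K:ℝ))) hHtop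
      exact h1.eventually (eventually_lt_nhds (by linarith))
    have E4 : ∀ᶠ ε in nhdsWithin (0:ℝ) (Set.Ioi 0),
        negLog (μ {ω | X ω < ε}) / ENNReal.ofReal (H ε) < c' :=
      hXIED.eventually (eventually_lt_nhds hlc')
    obtain ⟨ε, ⟨⟨hε0, hE2⟩, hE3⟩, hE4⟩ :=
      ((((eventually_mem_nhdsWithin).and E2).and E3).and E4).exists
    have hε0' : (0:ℝ) < ε := hε0
    have hHε : 0 < H ε := hH.pos ε hε0'
    have hKpos : (0:ℝ) < (K:ℝ) := by positivity
    -- each piece is exponentially small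
    have hbound : ∀ i ∈ Finset.range K,
        μ (T i ε) ≤ ENNReal.ofReal (Real.exp (-(t * H ε))) := by
      intro i hi
      have h1 : c < negLog (μ (T i ε)) / ENNReal.ofReal (H ε) := hE2 i hi
      have hb0 : ENNReal.ofReal (H ε) ≠ 0 := by
        simp only [ne_eq, ENNReal.ofReal_eq_zero, not_le]; exact hHε
      have h2 : c * ENNReal.ofReal (H ε) < negLog (μ (T i ε)) :=
        (ENNReal.lt_div_iff_mul_lt (Or.inl hb0) (Or.inl ENNReal.ofReal_ne_top)).mp h1
      have h3 : ENNReal.ofReal (t * H ε) ≤ negLog (μ (T i ε)) := by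
        refine le_of_lt ?_
        calc ENNReal.ofReal (t * H ε)
            = ENNReal.ofReal t * ENNReal.ofReal (H ε) := ENNReal.ofReal_mul ht0.le
          _ = c * ENNReal.ofReal (H ε) := by rw [htdef, ENNReal.ofReal_toReal hctop]
          _ < _ := h2
      exact (ofReal_le_negLog_iff prob_le_one (by positivity)).mp h3
    -- the covering and the sum bound
    have hsum : μ {ω | X ω < ε} ≤ ENNReal.ofReal (Real.exp (-(t * H ε - Real.log (K:ℝ)))) := by
      have hcov : μ {ω | X ω < ε} ≤ ∑ i ∈ Finset.range K, μ (T i ε) := by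
        rw [← hfix' ε]
        refine le_trans (measure_mono_ae ?_) (measure_biUnion_finset_le _ _)
        filter_upwards [hA0, hB0, hX0] with ω ha hb hx0ω
        intro hmem
        replace hmem : A ω * X ω + B ω < ε := hmem
        by_cases h0 : X ω < ε * y 0
        · refine Set.mem_iUnion.mpr ⟨0, Set.mem_iUnion.mpr ⟨Finset.mem_range.mpr (by omega), ?_⟩⟩
          simp only [hTdef, if_pos rfl]
          exact h0
        push_neg at h0
        by_cases hNcase : ε * y N ≤ X ω
        · refine Set.mem_iUnion.mpr ⟨N+1, Set.mem_iUnion.mpr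
            ⟨Finset.mem_range.mpr (by omega), ?_⟩⟩
          simp only [hTdef, if_neg (Nat.succ_ne_zero N), if_pos rfl, Set.mem_setOf_eq]
          have hm : A ω * (ε * y N) ≤ A ω * X ω := mul_le_mul_of_nonneg_left hNcase ha
          calc ε * A ω * y N + B ω = A ω * (ε * y N) + B ω := by ring
            _ ≤ A ω * X ω + B ω := add_le_add_left hm _
            _ < ε := hmem
        push_neg at hNcase
        have hP0 : ε * y 0 ≤ X ω := h0
        set i := Nat.findGreatest (fun j => ε * y j ≤ X ω) N with hidef
        have hiP : ε * y i ≤ X ω := by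
          simpa using Nat.findGreatest_spec (P := fun j => ε * y j ≤ X ω) (Nat.zero_le N) hP0
        have hile : i ≤ N := Nat.findGreatest_le N
        have hiN : i ≠ N := by
          intro h
          rw [h] at hiP
          exact absurd hiP (not_le.mpr hNcase)
        have hnot : ¬ (ε * y (i+1) ≤ X ω) := by
          have := Nat.findGreatest_is_greatest (P := fun j => ε * y j ≤ X ω)
            (by omega : Nat.findGreatest (fun j => ε * y j ≤ X ω) N < i + 1) (by omega)
          simpa using this
        push_neg at hnot
        refine Set.mem_iUnion.mpr ⟨i+1, Set.mem_iUnion.mpr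
          ⟨Finset.mem_range.mpr (by omega), ?_⟩⟩
        simp only [hTdef, if_neg (Nat.succ_ne_zero i), if_neg (by omega : ¬ (i+1 = N+1)),
          Set.mem_inter_iff, Set.mem_setOf_eq, Nat.add_sub_cancel]
        refine ⟨hnot, ?_⟩
        have hm : A ω * (ε * y i) ≤ A ω * X ω := mul_le_mul_of_nonneg_left hiP ha
        calc ε * A ω * y i + B ω = A ω * (ε * y i) + B ω := by ring
          _ ≤ A ω * X ω + B ω := add_le_add_left hm _
          _ < ε := hmem
      calc μ {ω | X ω < ε} ≤ ∑ i ∈ Finset.range K, μ (T i ε) := hcov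
        _ ≤ (Finset.range K).card • ENNReal.ofReal (Real.exp (-(t * H ε))) :=
            Finset.sum_le_card_nsmul _ _ _ hbound
        _ = (K : ℝ≥0∞) * ENNReal.ofReal (Real.exp (-(t * H ε))) := by
            rw [Finset.card_range, nsmul_eq_mul]
        _ = ENNReal.ofReal ((K:ℝ) * Real.exp (-(t * H ε))) := by
            rw [ENNReal.ofReal_mul (by positivity), ENNReal.ofReal_natCast]
        _ = ENNReal.ofReal (Real.exp (-(t * H ε - Real.log (K:ℝ)))) := by
            congr 1
            rw [show -(t * H ε - Real.log (K:ℝ)) = Real.log (K:ℝ) + (-(t * H ε)) by ring,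
              Real.exp_add, Real.exp_log hKpos]
    -- conclude
    have hlogK : Real.log (K:ℝ) < (t - c'.toReal) * H ε := (div_lt_iff₀ hHε).mp hE3
    have hs0 : 0 ≤ t * H ε - Real.log (K:ℝ) := by nlinarith [mul_nonneg hc'0 hHε.le]
    have hnl : ENNReal.ofReal (t * H ε - Real.log (K:ℝ)) ≤ negLog (μ {ω | X ω < ε}) :=
      (ofReal_le_negLog_iff prob_le_one hs0).mpr hsum
    have hfinal : c' ≤ negLog (μ {ω | X ω < ε}) / ENNReal.ofReal (H ε) := by
      calc c' = ENNReal.ofReal c'.toReal := (ENNReal.ofReal_toReal hc'top).symm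
        _ ≤ ENNReal.ofReal ((t * H ε - Real.log (K:ℝ)) / H ε) := by
            apply ENNReal.ofReal_le_ofReal
            rw [le_div_iff₀ hHε]
            nlinarith
        _ = ENNReal.ofReal (t * H ε - Real.log (K:ℝ)) / ENNReal.ofReal (H ε) :=
            ENNReal.ofReal_div_of_pos hHε
        _ ≤ _ := ENNReal.div_le_div_right hnl _
    exact absurd (lt_of_le_of_lt hfinal hE4) (lt_irrefl c')
  exact le_antisymm hub hlb
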